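/- Let α ≥ 0 and 2 + 2α < p < 2(2+α), and define F_{α,p}(s) = B((2+α)/p, 1−(2+α)/p) · H_{α,p}(s) − ∫₀¹ ψ_{α,p}(t) K_{α,p}(s,t) dt for s ∈ [0,1]. Then for every s ∈ (0,1), F_{α,p} is differentiable at s with derivative F'_{α,p}(s) = 2 s^{2p−4α−5} (1−s⁴)^α · (s^{8+4α−2p} B((2+α)/p, 1−(2+α)/p) − ∫₀^s ψ_{α,p}(t) dt). -/

import Mathlib

open MeasureTheory intervalIntegral

/-- The Beta function `B(x,y) = ∫₀¹ t^(x-1) (1-t)^(y-1) dt`. -/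
noncomputable def betaFn (x y : ℝ) : ℝ :=
  ∫ t in (0:ℝ)..1, t ^ (x - 1) * (1 - t) ^ (y - 1)

/-- The incomplete Beta function `B_T(x,y) = ∫₀^T s^(x-1) (1-s)^(y-1) ds`. -/
noncomputable def betaInc (T x y : ℝ) : ℝ :=
  ∫ s in (0:ℝ)..T, s ^ (x - 1) * (1 - s) ^ (y - 1)

/-- The regularized incomplete Beta function `I_T(x,y) = B_T(x,y)/B(x,y)`. -/
noncomputable def betaReg (T x y : ℝ) : ℝ := betaInc T x y / betaFn x y

/-- Generalized binomial coefficient `binom(α,k) = α(α-1)⋯(α-k+1)/k!`. -/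
noncomputable def gBinom (α : ℝ) (k : ℕ) : ℝ :=
  (∏ i ∈ Finset.range k, (α - i)) / (Nat.factorial k)

/-- `ψ_{α,p}(t) = t^((2+α)/p - 1) (1-t)^(-(2+α)/p)`. -/
noncomputable def psiFn (α p t : ℝ) : ℝ :=
  t ^ ((2 + α) / p - 1) * (1 - t) ^ (-((2 + α) / p))

/-- `H_{α,p}(s) = Σ_k binom(α,k)(-1)^k/(p-2α-2+2k) - (1/(2(α+1)))(1-s⁴)^(α+1)`. -/
noncomputable def Hfun (α p s : ℝ) : ℝ :=
  (∑' k : ℕ, gBinom α k * (-1) ^ k / (p - 2 * α - 2 + 2 * k)) -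
    1 / (2 * (α + 1)) * (1 - s ^ 4) ^ (α + 1)

/-- `K_{α,p}(s,t) = Σ_k binom(α,k)(-1)^k max{s²,t²}^(p-2α-2+2k)/(p-2α-2+2k)`. -/
noncomputable def Kfun (α p s t : ℝ) : ℝ :=
  ∑' k : ℕ, gBinom α k * (-1) ^ k * (max (s ^ 2) (t ^ 2)) ^ (p - 2 * α - 2 + 2 * (k : ℝ)) /
    (p - 2 * α - 2 + 2 * k)

/-- Condition (C): `∫₀¹ I_t((2+α)/p, 1-(2+α)/p) t^(2p-4α-5)(1-t⁴)^α dt - 1/(4(α+1)) ≤ 0`. -/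
noncomputable def condC (α p : ℝ) : Prop :=
  (∫ t in (0:ℝ)..1,
      betaReg t ((2 + α) / p) (1 - (2 + α) / p) * t ^ (2 * p - 4 * α - 5) * (1 - t ^ 4) ^ α)
    - 1 / (4 * (α + 1)) ≤ 0

/-- Lebesgue area measure on `ℂ` normalized so that the unit disk has measure 1. -/
noncomputable def normalizedArea : Measure ℂ := (ENNReal.ofReal Real.pi)⁻¹ • volume

/-- The (p-th power of the) weighted Bergman norm:
`‖f‖_{A^p_α} = ((α+1) ∫_𝔻 |f(w)|^p (1-|w|²)^α dA(w))^(1/p)`. -/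
noncomputable def bergmanNorm (α p : ℝ) (f : ℂ → ℂ) : ℝ :=
  ((α + 1) * ∫ w in Metric.ball (0 : ℂ) 1,
      ‖f w‖ ^ p * (1 - ‖w‖ ^ 2) ^ α ∂normalizedArea) ^ (1 / p)

/-- Membership in the weighted Bergman space `A^p_α`: `f` is analytic on the unit disk and has
finite Bergman norm (the defining integrand is integrable). -/
def MemBergman (α p : ℝ) (f : ℂ → ℂ) : Prop :=
  DifferentiableOn ℂ f (Metric.ball (0 : ℂ) 1) ∧
  IntegrableOn (fun w => ‖f w‖ ^ p * (1 - ‖w‖ ^ 2) ^ α)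
    (Metric.ball (0 : ℂ) 1) normalizedArea

/-- The Hilbert matrix operator `ℋ(f)(z) = ∫₀¹ f(t/((t-1)z+1)) / ((t-1)z+1) dt`. -/
noncomputable def hilbertOp (f : ℂ → ℂ) (z : ℂ) : ℂ :=
  ∫ t in (0:ℝ)..1, f ((t : ℂ) / (((t : ℂ) - 1) * z + 1)) / (((t : ℂ) - 1) * z + 1)

/-- The operator norm of the Hilbert matrix operator on `A^p_α`:
`sup { ‖ℋ f‖_{A^p_α} : f ∈ A^p_α, ‖f‖_{A^p_α} ≤ 1 }`. -/
noncomputable def hilbertOpNorm (α p : ℝ) : ℝ :=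
  sSup {c : ℝ | ∃ f : ℂ → ℂ, MemBergman α p f ∧ bergmanNorm α p f ≤ 1 ∧
    c = bergmanNorm α p (hilbertOp f)}

/-!
Write `e = p - 2α - 2 > 0`. The kernel is `K(u, t) = V(max(u², t²))` with
`V(m) = ∑ binom(α,k) (-1)^k m^(e+2k) / (e+2k)`, and termwise differentiation together with the
binomial series gives `V'(m) = m^(e-1) (1 - m²)^α`. Splitting the `t`-integral at `t = u`,
`∫₀¹ ψ K(u,·) = (∫₀^u ψ) V(u²) + ∫_u^1 ψ(t) V(t²) dt`; on differentiating, the two boundary terms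
`± ψ(u) V(u²)` cancel and only `(∫₀^u ψ) · 2u^(2e-1) (1 - u⁴)^α` survives, while `B · H` contributes
`2B u³ (1 - u⁴)^α`. For `α ≥ 0` the coefficients `binom(α,k)` are absolutely summable (for `k ≥ α`,
`k |binom(α,k)|` decreases by exactly `α |binom(α,k)|` at each step), so `V` is bounded on `[0,1]`
and `ψ · V(t²)` is integrable.
-/
open Filter Set

lemma gBinom_succ (α : ℝ) (k : ℕ) :
    gBinom α (k + 1) = gBinom α k * (α - k) / (k + 1) := by
  rw [gBinom, gBinom, Finset.prod_range_succ, Nat.factorial_succ]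
  push_cast
  field_simp

lemma gBinom_zero_left {k : ℕ} (hk : k ≠ 0) : gBinom 0 k = 0 := by
  rw [gBinom, Finset.prod_eq_zero (i := 0) (by simpa [Nat.pos_iff_ne_zero] using hk) (by simp),
    zero_div]

lemma mul_abs_gBinom_sub_succ {α : ℝ} {k : ℕ} (hk : α ≤ k) :
    k * |gBinom α k| - (k + 1) * |gBinom α (k + 1)| = α * |gBinom α k| := by
  rw [gBinom_succ, abs_div, abs_mul, abs_of_nonpos (sub_nonpos.2 hk),
    abs_of_pos (by positivity : (0 : ℝ) < k + 1)]
  field_simp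
  ring

lemma summable_abs_gBinom {α : ℝ} (hα : 0 ≤ α) : Summable fun k => |gBinom α k| := by
  rcases hα.eq_or_lt with rfl | hα
  · refine summable_of_ne_finset_zero (s := {0}) fun k hk => ?_
    rw [gBinom_zero_left (by simpa using hk), abs_zero]
  set N := ⌈α⌉₊
  have htel : ∀ n, ∑ i ∈ Finset.range n, α * |gBinom α (N + i)| ≤ N * |gBinom α N| := by
    intro n
    calc ∑ i ∈ Finset.range n, α * |gBinom α (N + i)|
        = ∑ i ∈ Finset.range n, (((N + i : ℕ) : ℝ) * |gBinom α (N + i)|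
            - ((N + (i + 1) : ℕ) : ℝ) * |gBinom α (N + (i + 1))|) := by
          refine Finset.sum_congr rfl fun i _ => ?_
          rw [← mul_abs_gBinom_sub_succ ((Nat.le_ceil α).trans (by simp [N]))]
          push_cast
          ring_nf
      _ = N * |gBinom α N| - ((N + n : ℕ) : ℝ) * |gBinom α (N + n)| :=
          Finset.sum_range_sub' (fun i => ((N + i : ℕ) : ℝ) * |gBinom α (N + i)|) n
      _ ≤ N * |gBinom α N| := sub_le_self _ (by positivity)
  have h := (summable_of_sum_range_le (fun i => by positivity) htel).mul_left α⁻¹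
  simp only [← mul_assoc, inv_mul_cancel₀ hα.ne', one_mul] at h
  exact (summable_nat_add_iff N).mp (by simpa only [add_comm] using h)

lemma gBinom_eq_choose (α : ℝ) (k : ℕ) : gBinom α k = Ring.choose α k := by
  rw [Ring.choose_eq_smul, smul_eq_mul, ← Polynomial.aeval_eq_smeval, Polynomial.aeval_def,
    Polynomial.eval₂_eq_eval_map, descPochhammer_map, descPochhammer_eval_eq_prod_range, gBinom,
    div_eq_inv_mul]

lemma hasSum_gBinom_mul_pow (α : ℝ) {x : ℝ} (hx : |x| < 1) :
    HasSum (fun k : ℕ => gBinom α k * (-1) ^ k * x ^ k) ((1 - x) ^ α) := by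
  have h := (Real.one_add_rpow_hasFPowerSeriesOnBall_zero (a := α)).hasSum (y := -x) (by
    simpa [edist_dist, Real.dist_eq] using hx)
  simp only [binomialSeries, FormalMultilinearSeries.ofScalars_apply_eq, zero_add] at h
  rw [← sub_eq_add_neg] at h
  refine h.congr_fun fun k => ?_
  rw [gBinom_eq_choose, neg_pow, smul_eq_mul]
  ring

-- The function `V` of the sketch above.
noncomputable def binomPrimitive (α e m : ℝ) : ℝ :=
  ∑' k : ℕ, gBinom α k * (-1) ^ k * m ^ (e + 2 * (k : ℝ)) / (e + 2 * k)

lemma Kfun_eq_binomPrimitive (α p s t : ℝ) :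
    Kfun α p s t = binomPrimitive α (p - 2 * α - 2) (max (s ^ 2) (t ^ 2)) := rfl

section binomPrimitive

variable {α e : ℝ}

lemma norm_binomPrimitive_term_le (he : 0 < e) {m : ℝ} (hm0 : 0 ≤ m) (hm1 : m ≤ 1) (k : ℕ) :
    ‖gBinom α k * (-1) ^ k * m ^ (e + 2 * (k : ℝ)) / (e + 2 * k)‖ ≤ |gBinom α k| / e := by
  have hk : e ≤ e + 2 * (k : ℝ) := by linarith [k.cast_nonneg (α := ℝ)]
  rw [Real.norm_eq_abs, abs_div, abs_mul, abs_mul, abs_pow, abs_neg, abs_one, one_pow, mul_one,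
    abs_of_pos (he.trans_le hk), abs_of_nonneg (Real.rpow_nonneg hm0 _)]
  gcongr
  exact mul_le_of_le_one_right (abs_nonneg _) (Real.rpow_le_one hm0 hm1 (he.trans_le hk).le)

lemma summable_binomPrimitive (hα : 0 ≤ α) (he : 0 < e) {m : ℝ} (hm0 : 0 ≤ m) (hm1 : m ≤ 1) :
    Summable fun k : ℕ => gBinom α k * (-1) ^ k * m ^ (e + 2 * (k : ℝ)) / (e + 2 * k) :=
  .of_norm_bounded ((summable_abs_gBinom hα).div_const e) (norm_binomPrimitive_term_le he hm0 hm1)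

lemma norm_binomPrimitive_le (hα : 0 ≤ α) (he : 0 < e) {m : ℝ} (hm0 : 0 ≤ m) (hm1 : m ≤ 1) :
    ‖binomPrimitive α e m‖ ≤ (∑' k, |gBinom α k|) / e :=
  tsum_of_norm_bounded ((summable_abs_gBinom hα).hasSum.div_const e)
    (norm_binomPrimitive_term_le he hm0 hm1)

lemma hasDerivAt_binomPrimitive_term (he : 0 < e) (k : ℕ) {y : ℝ} (hy : 0 < y) :
    HasDerivAt (fun m => gBinom α k * (-1) ^ k * m ^ (e + 2 * (k : ℝ)) / (e + 2 * k))
      (gBinom α k * (-1) ^ k * y ^ (e + 2 * (k : ℝ) - 1)) y := by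
  have hk : 0 < e + 2 * (k : ℝ) := by positivity
  refine (((Real.hasDerivAt_rpow_const (Or.inl hy.ne')).const_mul
    (gBinom α k * (-1) ^ k)).div_const (e + 2 * (k : ℝ))).congr_deriv ?_
  field_simp

lemma hasDerivAt_binomPrimitive (hα : 0 ≤ α) (he : 0 < e) {m : ℝ} (hm : m ∈ Ioo 0 1) :
    HasDerivAt (binomPrimitive α e) (m ^ (e - 1) * (1 - m ^ 2) ^ α) m := by
  obtain ⟨hm0, hm1⟩ := hm
  have hmem : m ∈ Ioo (m / 2) 1 := ⟨by linarith, hm1⟩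
  have hbound : ∀ k, ∀ y ∈ Ioo (m / 2) 1,
      ‖gBinom α k * (-1) ^ k * y ^ (e + 2 * (k : ℝ) - 1)‖ ≤ |gBinom α k| * (2 / m) := by
    intro k y ⟨hy0, hy1⟩
    have hy : 0 < y := by linarith
    rw [Real.norm_eq_abs, abs_mul, abs_mul, abs_pow, abs_neg, abs_one, one_pow, mul_one,
      abs_of_nonneg (Real.rpow_nonneg hy.le _), Real.rpow_sub_one hy.ne']
    refine mul_le_mul_of_nonneg_left ?_ (abs_nonneg _)
    calc y ^ (e + 2 * (k : ℝ)) / y ≤ 1 / y := by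
          gcongr
          exact Real.rpow_le_one hy.le hy1.le (by positivity)
      _ ≤ 2 / m := by rw [div_le_div_iff₀ hy hm0]; linarith
  have hderiv := hasDerivAt_tsum_of_isPreconnected
    ((summable_abs_gBinom hα).mul_right (2 / m)) isOpen_Ioo isPreconnected_Ioo
    (fun k y hy => hasDerivAt_binomPrimitive_term he k (by linarith [hy.1] : 0 < y))
    hbound hmem (summable_binomPrimitive hα he hm0.le hm1.le) hmem
  have hsum : HasSum (fun k : ℕ => gBinom α k * (-1) ^ k * m ^ (e + 2 * (k : ℝ) - 1))
      (m ^ (e - 1) * (1 - m ^ 2) ^ α) := by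
    refine ((hasSum_gBinom_mul_pow α (x := m ^ 2) ?_).mul_left (m ^ (e - 1))).congr_fun
      fun k => ?_
    · rw [abs_of_pos (by positivity)]; nlinarith
    · rw [show e + 2 * (k : ℝ) - 1 = (e - 1) + 2 * (k : ℝ) by ring, Real.rpow_add hm0,
        Real.rpow_mul_natCast hm0.le, Real.rpow_two]
      ring
  exact hsum.tsum_eq ▸ hderiv

lemma hasDerivAt_binomPrimitive_sq (hα : 0 ≤ α) (he : 0 < e) {u : ℝ}
    (hu : u ∈ Ioo 0 1) :
    HasDerivAt (fun v => binomPrimitive α e (v ^ 2)) (2 * u ^ (2 * e - 1) * (1 - u ^ 4) ^ α) u := by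
  obtain ⟨hu0, hu1⟩ := hu
  have hu2 : u ^ 2 ∈ Ioo 0 1 := ⟨by positivity, by nlinarith⟩
  have hpow : (u ^ 2) ^ (e - 1) * u = u ^ (2 * e - 1) := by
    rw [← Real.rpow_natCast, ← Real.rpow_mul hu0.le, ← Real.rpow_add_one hu0.ne']
    norm_num
    ring_nf
  refine ((hasDerivAt_binomPrimitive hα he hu2).comp (h := fun v => v ^ 2) u
    (hasDerivAt_pow 2 u)).congr_deriv ?_
  rw [← hpow, show (u ^ 2) ^ 2 = u ^ 4 by ring]
  push_cast
  ring

lemma continuousOn_binomPrimitive_sq (hα : 0 ≤ α) (he : 0 < e) :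
    ContinuousOn (fun t => binomPrimitive α e (t ^ 2)) (Ioo 0 1) := fun _ ht =>
  (hasDerivAt_binomPrimitive_sq hα he ht).continuousAt.continuousWithinAt

end binomPrimitive

lemma hasDerivAt_Hfun {α : ℝ} (hα : 0 ≤ α) (p s : ℝ) :
    HasDerivAt (Hfun α p) (2 * s ^ 3 * (1 - s ^ 4) ^ α) s := by
  have hα1 : α + 1 ≠ 0 := by positivity
  refine (((((hasDerivAt_pow 4 s).const_sub 1).rpow_const (p := α + 1) (Or.inr (by linarith))
    ).const_mul (1 / (2 * (α + 1)))).const_sub _).congr_deriv ?_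
  rw [add_sub_cancel_right]
  field_simp
  push_cast
  ring

section integral

variable {f : ℝ → ℝ} {a b x : ℝ}

lemma hasDerivAt_integral_right_of_continuousOn (hf : IntervalIntegrable f volume a b)
    (hcont : ContinuousOn f (Ioo a b)) (hx : x ∈ Ioo a b) :
    HasDerivAt (fun u => ∫ t in a..u, f t) (f x) x :=
  integral_hasDerivAt_right
    (hf.mono_set (uIcc_subset_uIcc_left (Icc_subset_uIcc (Ioo_subset_Icc_self hx))))
    (hcont.stronglyMeasurableAtFilter isOpen_Ioo x hx)
    (hcont.continuousAt (isOpen_Ioo.mem_nhds hx))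

lemma hasDerivAt_integral_left_of_continuousOn (hf : IntervalIntegrable f volume a b)
    (hcont : ContinuousOn f (Ioo a b)) (hx : x ∈ Ioo a b) :
    HasDerivAt (fun u => ∫ t in u..b, f t) (-f x) x :=
  integral_hasDerivAt_left
    (hf.mono_set (uIcc_subset_uIcc_right (Icc_subset_uIcc (Ioo_subset_Icc_self hx))))
    (hcont.stronglyMeasurableAtFilter isOpen_Ioo x hx)
    (hcont.continuousAt (isOpen_Ioo.mem_nhds hx))

end integral

lemma continuousOn_psiFn (α p : ℝ) : ContinuousOn (psiFn α p) (Ioo 0 1) := fun _ ht =>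
  ((Real.continuousAt_rpow_const _ _ (Or.inl ht.1.ne')).mul
    ((continuousAt_const.sub continuousAt_id).rpow_const
      (Or.inl (sub_ne_zero.2 ht.2.ne')))).continuousWithinAt

section psiFn

variable {α p : ℝ}

lemma intervalIntegrable_psiFn (hc0 : 0 < (2 + α) / p) (hc1 : (2 + α) / p < 1) :
    IntervalIntegrable (psiFn α p) volume 0 1 := by
  have hbeta := (Complex.betaIntegral_convergent (u := ((2 + α) / p : ℝ))
    (v := (1 - (2 + α) / p : ℝ)) (by simpa using hc0) (by simpa using hc1)).norm
  rw [intervalIntegrable_iff_integrableOn_Ioo_of_le zero_le_one] at hbeta ⊢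
  refine hbeta.congr_fun (fun t ⟨ht0, ht1⟩ => ?_) measurableSet_Ioo
  have ht1' : 0 < 1 - t := sub_pos.2 ht1
  dsimp only
  rw [norm_mul, show (1 : ℂ) - t = ((1 - t : ℝ) : ℂ) by push_cast; ring,
    Complex.norm_cpow_eq_rpow_re_of_pos ht0,
    Complex.norm_cpow_eq_rpow_re_of_pos ht1', psiFn]
  norm_num

lemma continuousOn_psiFn_mul_binomPrimitive_sq {e : ℝ} (hα : 0 ≤ α) (he : 0 < e) :
    ContinuousOn (fun t => psiFn α p t * binomPrimitive α e (t ^ 2)) (Ioo 0 1) :=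
  (continuousOn_psiFn α p).mul (continuousOn_binomPrimitive_sq hα he)

lemma intervalIntegrable_psiFn_mul_binomPrimitive_sq {e : ℝ} (hα : 0 ≤ α) (he : 0 < e)
    (hc0 : 0 < (2 + α) / p) (hc1 : (2 + α) / p < 1) :
    IntervalIntegrable (fun t => psiFn α p t * binomPrimitive α e (t ^ 2)) volume 0 1 := by
  have hψ := intervalIntegrable_psiFn hc0 hc1
  rw [intervalIntegrable_iff_integrableOn_Ioo_of_le zero_le_one] at hψ ⊢
  refine hψ.mul_bdd (c := (∑' k, |gBinom α k|) / e) ?_ ?_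
  · exact (continuousOn_binomPrimitive_sq hα he).aestronglyMeasurable measurableSet_Ioo
  · exact ae_restrict_of_forall_mem measurableSet_Ioo fun t ⟨ht0, ht1⟩ =>
      norm_binomPrimitive_le hα he (by positivity) (by nlinarith)

lemma integral_psiFn_mul_Kfun (hα : 0 ≤ α) (he : 0 < p - 2 * α - 2)
    (hc0 : 0 < (2 + α) / p) (hc1 : (2 + α) / p < 1) {u : ℝ} (hu : u ∈ Ioo 0 1) :
    ∫ t in (0:ℝ)..1, psiFn α p t * Kfun α p u t
      = (∫ t in (0:ℝ)..u, psiFn α p t) * binomPrimitive α (p - 2 * α - 2) (u ^ 2)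
        + ∫ t in u..1, psiFn α p t * binomPrimitive α (p - 2 * α - 2) (t ^ 2) := by
  obtain ⟨hu0, hu1⟩ := hu
  have hu : u ∈ uIcc 0 1 := by rw [uIcc_of_le zero_le_one]; exact ⟨hu0.le, hu1.le⟩
  have hK₁ : EqOn (fun t => psiFn α p t * Kfun α p u t)
      (fun t => psiFn α p t * binomPrimitive α (p - 2 * α - 2) (u ^ 2)) (uIcc 0 u) := by
    intro t ht
    rw [uIcc_of_le hu0.le] at ht
    simp only [Kfun_eq_binomPrimitive, max_eq_left (pow_le_pow_left₀ ht.1 ht.2 2)]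
  have hK₂ : EqOn (fun t => psiFn α p t * Kfun α p u t)
      (fun t => psiFn α p t * binomPrimitive α (p - 2 * α - 2) (t ^ 2)) (uIcc u 1) := by
    intro t ht
    rw [uIcc_of_le hu1.le] at ht
    simp only [Kfun_eq_binomPrimitive, max_eq_right (pow_le_pow_left₀ hu0.le ht.1 2)]
  have hI₁ := (intervalIntegrable_congr (hK₁.mono uIoc_subset_uIcc)).2
    (((intervalIntegrable_psiFn hc0 hc1).mono_set (uIcc_subset_uIcc_left hu)).mul_const _)
  have hI₂ := (intervalIntegrable_congr (hK₂.mono uIoc_subset_uIcc)).2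
    ((intervalIntegrable_psiFn_mul_binomPrimitive_sq hα he hc0 hc1).mono_set
      (uIcc_subset_uIcc_right hu))
  rw [← integral_add_adjacent_intervals hI₁ hI₂, integral_congr hK₁, integral_congr hK₂,
    intervalIntegral.integral_mul_const]

end psiFn

theorem hasDerivAt_F_general (α p : ℝ) (hα : 0 ≤ α)
    (hp1 : 2 + 2 * α < p) (s : ℝ) (hs : s ∈ Set.Ioo (0:ℝ) 1) :
    HasDerivAt (fun u : ℝ => betaFn ((2 + α) / p) (1 - (2 + α) / p) * Hfun α p u
        - ∫ t in (0:ℝ)..1, psiFn α p t * Kfun α p u t)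
      (2 * s ^ (2 * p - 4 * α - 5) * (1 - s ^ 4) ^ α *
        (s ^ (8 + 4 * α - 2 * p) * betaFn ((2 + α) / p) (1 - (2 + α) / p)
          - ∫ t in (0:ℝ)..s, psiFn α p t)) s := by
  have hp : 0 < p := by linarith
  have he : 0 < p - 2 * α - 2 := by linarith
  have hc0 : 0 < (2 + α) / p := by positivity
  have hc1 : (2 + α) / p < 1 := (div_lt_one hp).2 (by linarith)
  set B := betaFn ((2 + α) / p) (1 - (2 + α) / p)
  set V := binomPrimitive α (p - 2 * α - 2)
  have hrepr : (fun u => B * Hfun α p u - ∫ t in (0:ℝ)..1, psiFn α p t * Kfun α p u t)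
      =ᶠ[nhds s] fun u => B * Hfun α p u
        - ((∫ t in (0:ℝ)..u, psiFn α p t) * V (u ^ 2) + ∫ t in u..1, psiFn α p t * V (t ^ 2)) :=
    eventually_of_mem (isOpen_Ioo.mem_nhds hs) fun u hu =>
      congrArg (B * Hfun α p u - ·) (integral_psiFn_mul_Kfun hα he hc0 hc1 hu)
  have hderiv := ((hasDerivAt_Hfun hα p s).const_mul B).sub
    (((hasDerivAt_integral_right_of_continuousOn (intervalIntegrable_psiFn hc0 hc1)
        (continuousOn_psiFn α p) hs).mul (hasDerivAt_binomPrimitive_sq hα he hs)).add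
      (hasDerivAt_integral_left_of_continuousOn
        (intervalIntegrable_psiFn_mul_binomPrimitive_sq hα he hc0 hc1)
        (continuousOn_psiFn_mul_binomPrimitive_sq hα he) hs))
  refine (hderiv.congr_of_eventuallyEq hrepr).congr_deriv ?_
  have hss : s ^ (2 * p - 4 * α - 5) * s ^ (8 + 4 * α - 2 * p) = s ^ 3 := by
    rw [← Real.rpow_add hs.1, show 2 * p - 4 * α - 5 + (8 + 4 * α - 2 * p) = ((3 : ℕ) : ℝ) by
      push_cast; ring, Real.rpow_natCast]
  rw [show 2 * (p - 2 * α - 2) - 1 = 2 * p - 4 * α - 5 by ring]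
  linear_combination (-(2 * (1 - s ^ 4) ^ α * B)) * hss

theorem hasDerivAt_F (α p : ℝ) (hα : 0 ≤ α)
    (hp1 : 2 + 2 * α < p) (hp2 : p < 2 * (2 + α)) (s : ℝ) (hs : s ∈ Set.Ioo (0:ℝ) 1) :
    HasDerivAt (fun u : ℝ => betaFn ((2 + α) / p) (1 - (2 + α) / p) * Hfun α p u
        - ∫ t in (0:ℝ)..1, psiFn α p t * Kfun α p u t)
      (2 * s ^ (2 * p - 4 * α - 5) * (1 - s ^ 4) ^ α *
        (s ^ (8 + 4 * α - 2 * p) * betaFn ((2 + α) / p) (1 - (2 + α) / p)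
          - ∫ t in (0:ℝ)..s, psiFn α p t)) s :=
  hasDerivAt_F_general α p hα hp1 s hs
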